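/- The projection T(M') of any stable matching M' in the auxiliary graph G' is a dominant matching in G. -/
import Mathlib


open Classical

/-- A bipartite graph `G = (A ∪ B, E)` with strict preference lists:
`adj` is the edge relation, and each vertex ranks its neighbors by a rank
function (lower rank = more preferred), injective on neighbors. -/
structure PrefSys (A B : Type) where
  adj : A → B → Prop
  rankA : A → B → ℕ
  rankB : B → A → ℕ
  rankA_inj : ∀ a b b', adj a b → adj a b' → rankA a b = rankA a b' → b = b'
  rankB_inj : ∀ b a a', adj a b → adj a' b → rankB b a = rankB b a' → a = a'

namespace PrefSys

variable {A B : Type} (P : PrefSys A B)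

/-- `M` is a matching of `G`: a set of edges, no two sharing a vertex. -/
def IsMatching (M : Finset (A × B)) : Prop :=
  (∀ p ∈ M, P.adj p.1 p.2) ∧
  (∀ p ∈ M, ∀ q ∈ M, p.1 = q.1 → p = q) ∧
  (∀ p ∈ M, ∀ q ∈ M, p.2 = q.2 → p = q)

/-- Vertex `a ∈ A` prefers matching `M` to matching `M'`:
`a` is matched in `M` and either unmatched in `M'` or matched to a strictly
worse partner in `M'`. -/
def prefA (M M' : Finset (A × B)) (a : A) : Prop :=
  ∃ b, (a, b) ∈ M ∧ ∀ b', (a, b') ∈ M' → P.rankA a b < P.rankA a b'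

/-- Vertex `b ∈ B` prefers matching `M` to matching `M'`. -/
def prefB (M M' : Finset (A × B)) (b : B) : Prop :=
  ∃ a, (a, b) ∈ M ∧ ∀ a', (a', b) ∈ M' → P.rankB b a < P.rankB b a'

/-- `φ(M, M')`: the number of vertices preferring `M` to `M'`. -/
noncomputable def phi (M M' : Finset (A × B)) : ℕ :=
  Nat.card {a : A // P.prefA M M' a} + Nat.card {b : B // P.prefB M M' b}

/-- A matching is popular if it never loses a head-to-head election. -/
def Popular (M : Finset (A × B)) : Prop :=
  P.IsMatching M ∧ ∀ M', P.IsMatching M' → P.phi M' M ≤ P.phi M M'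

/-- `a`'s vote on the edge `(a,b)` versus its `M`-partner is `+`. -/
def voteAplus (M : Finset (A × B)) (a : A) (b : B) : Prop :=
  ∀ b', (a, b') ∈ M → P.rankA a b < P.rankA a b'

/-- `b`'s vote on the edge `(a,b)` versus its `M`-partner is `+`. -/
def voteBplus (M : Finset (A × B)) (a : A) (b : B) : Prop :=
  ∀ a', (a', b) ∈ M → P.rankB b a < P.rankB b a'

/-- `(a,b)` is a blocking edge (an edge outside `M` labeled `(+,+)`). -/
def Blocking (M : Finset (A × B)) (a : A) (b : B) : Prop :=
  P.adj a b ∧ (a, b) ∉ M ∧ P.voteAplus M a b ∧ P.voteBplus M a b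

/-- A stable matching: a matching with no blocking edge. -/
def Stable (M : Finset (A × B)) : Prop :=
  P.IsMatching M ∧ ∀ a b, ¬ P.Blocking M a b

/-- A dominant matching: popular, and more popular than every larger matching. -/
def Dominant (M : Finset (A × B)) : Prop :=
  P.Popular M ∧ ∀ M', P.IsMatching M' → M.card < M'.card → P.phi M' M < P.phi M M'

/-- The edge `(a,b)` survives in the subgraph `G_M` (i.e. it is an edge of `G`
that is in `M` or is not labeled `(-,-)`). -/
def inGM (M : Finset (A × B)) (a : A) (b : B) : Prop :=
  P.adj a b ∧ ((a, b) ∈ M ∨ P.voteAplus M a b ∨ P.voteBplus M a b)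

end PrefSys

namespace PrefSys

/-- The auxiliary graph `G'` of `G`: men come in two copies `a₀` (`Sum.inl a`)
and `a₁` (`Sum.inr a`); women are the original women `b` (`Sum.inl b`) together
with a dummy woman `d(a)` (`Sum.inr a`) for each man `a`.  `d(a)` is adjacent
only to `a₀` and `a₁` and prefers `a₀`; `a₀` ranks `a`'s neighbors in `a`'s
original order followed last by `d(a)`; `a₁` ranks `d(a)` first and then `a`'s
neighbors in original order; each woman `b` prefers every level-1 man to every
level-0 man, each level ordered by `b`'s original preferences. -/
noncomputable def aux {A B : Type} [Fintype A] [Fintype B] (P : PrefSys A B) :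
    PrefSys (A ⊕ A) (B ⊕ A) where
  adj x y :=
    match x, y with
    | .inl a, .inl b => P.adj a b
    | .inl a, .inr a' => a' = a
    | .inr a, .inl b => P.adj a b
    | .inr a, .inr a' => a' = a
  rankA x y :=
    match x, y with
    | .inl a, .inl b => P.rankA a b
    | .inl a, .inr _ => (Finset.univ.sup (P.rankA a)) + 1
    | .inr a, .inl b => P.rankA a b + 1
    | .inr _, .inr _ => 0
  rankB y x :=
    match y, x with
    | .inl b, .inl a => P.rankB b a + (Finset.univ.sup (P.rankB b)) + 1
    | .inl b, .inr a => P.rankB b a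
    | .inr _, .inl _ => 0
    | .inr _, .inr _ => 1
  rankA_inj := by
    rintro (a | a) (b | a') (b' | a'') h1 h2 heq <;> dsimp only at h1 h2 heq ⊢
    · exact congrArg Sum.inl (P.rankA_inj a b b' h1 h2 heq)
    · exfalso
      have := Finset.le_sup (f := P.rankA a) (Finset.mem_univ b); omega
    · exfalso
      have := Finset.le_sup (f := P.rankA a) (Finset.mem_univ b'); omega
    · rw [h1, h2]
    · exact congrArg Sum.inl (P.rankA_inj a b b' h1 h2 (by omega))
    · exfalso; omega
    · exfalso; omega
    · rw [h1, h2]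
  rankB_inj := by
    rintro (b | a) (a' | a'') (a''' | a'''') h1 h2 heq <;> dsimp only at h1 h2 heq ⊢
    · exact congrArg Sum.inl (P.rankB_inj b a' a''' h1 h2 (by omega))
    · exfalso
      have := Finset.le_sup (f := P.rankB b) (Finset.mem_univ a''''); omega
    · exfalso
      have := Finset.le_sup (f := P.rankB b) (Finset.mem_univ a''); omega
    · exact congrArg Sum.inr (P.rankB_inj b a'' a'''' h1 h2 heq)
    · rw [← h1, ← h2]
    · exfalso; omega
    · exfalso; omega
    · rw [← h1, ← h2]

/-- The projection of an edge of `G'` to an edge of `G` (dummy edges ↦ none). -/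
def proj {A B : Type} : ((A ⊕ A) × (B ⊕ A)) → Option (A × B)
  | (.inl a, .inl b) => some (a, b)
  | (.inr a, .inl b) => some (a, b)
  | _ => none

/-- `T(M')`: delete the edges incident to dummy women and replace each edge
`(aᵢ, b)` with `b ∈ B` by `(a, b)`. -/
noncomputable def Tmap {A B : Type} (M' : Finset ((A ⊕ A) × (B ⊕ A))) :
    Finset (A × B) :=
  (M'.image proj).filterMap id (by
    intro o o' x hx hx'
    rw [id] at hx hx'
    rw [Option.mem_def] at hx hx'
    rw [hx, hx'])

end PrefSys

namespace PrefSys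
namespace AuxDom

set_option linter.unusedSectionVars false

open Sum

variable {A B : Type} [Fintype A] [Fintype B]

/-- `a` is matched at level 0 in `M'`. -/
def L0 (M' : Finset ((A ⊕ A) × (B ⊕ A))) (a : A) : Prop :=
  ∃ b : B, ((inl a : A ⊕ A), (inl b : B ⊕ A)) ∈ M'

/-- `a` is matched at level 1 in `M'`. -/
def L1 (M' : Finset ((A ⊕ A) × (B ⊕ A))) (a : A) : Prop :=
  ∃ b : B, ((inr a : A ⊕ A), (inl b : B ⊕ A)) ∈ M'

/-- `b` is matched to a level-0 man in `M'`. -/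
def BL0 (M' : Finset ((A ⊕ A) × (B ⊕ A))) (b : B) : Prop :=
  ∃ a : A, ((inl a : A ⊕ A), (inl b : B ⊕ A)) ∈ M'

/-- `b` is matched to a level-1 man in `M'`. -/
def BL1 (M' : Finset ((A ⊕ A) × (B ⊕ A))) (b : B) : Prop :=
  ∃ a : A, ((inr a : A ⊕ A), (inl b : B ⊕ A)) ∈ M'

noncomputable def alphaA (M' : Finset ((A ⊕ A) × (B ⊕ A))) (a : A) : ℤ :=
  if L0 M' a then 1 else if L1 M' a then -1 else 0

noncomputable def alphaB (M' : Finset ((A ⊕ A) × (B ⊕ A))) (b : B) : ℤ :=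
  if BL1 M' b then 1 else if BL0 M' b then -1 else 0

noncomputable def vAZ (P : PrefSys A B) (M : Finset (A × B)) (a : A) (b : B) : ℤ :=
  if (a, b) ∈ M then 0 else if P.voteAplus M a b then 1 else -1

noncomputable def vBZ (P : PrefSys A B) (M : Finset (A × B)) (a : A) (b : B) : ℤ :=
  if (a, b) ∈ M then 0 else if P.voteBplus M a b then 1 else -1

noncomputable def sAZ (P : PrefSys A B) (N M : Finset (A × B)) (a : A) : ℤ :=
  (if P.prefA N M a then 1 else 0) - (if P.prefA M N a then 1 else 0)

noncomputable def sBZ (P : PrefSys A B) (N M : Finset (A × B)) (b : B) : ℤ :=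
  (if P.prefB N M b then 1 else 0) - (if P.prefB M N b then 1 else 0)

section Basic

variable (P : PrefSys A B) (M' : Finset ((A ⊕ A) × (B ⊕ A)))

lemma mem_Tmap {a : A} {b : B} :
    (a, b) ∈ Tmap M' ↔
      ((inl a : A ⊕ A), (inl b : B ⊕ A)) ∈ M' ∨ ((inr a : A ⊕ A), (inl b : B ⊕ A)) ∈ M' := by
  unfold Tmap
  simp only [Finset.mem_filterMap, Finset.mem_image, id, Option.mem_def]
  constructor
  · rintro ⟨o, ⟨⟨x, y⟩, hxy, rfl⟩, ho⟩
    rcases x with a' | a' <;> rcases y with b' | c <;>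
      simp only [proj, Option.some.injEq, Prod.mk.injEq, reduceCtorEq] at ho
    · obtain ⟨rfl, rfl⟩ := ho; exact Or.inl hxy
    · obtain ⟨rfl, rfl⟩ := ho; exact Or.inr hxy
  · rintro (h | h)
    · exact ⟨some (a, b), ⟨(inl a, inl b), h, rfl⟩, rfl⟩
    · exact ⟨some (a, b), ⟨(inr a, inl b), h, rfl⟩, rfl⟩

variable {M'}

lemma huniqF (hm : (P.aux).IsMatching M') {x : A ⊕ A} {y y' : B ⊕ A}
    (h : (x, y) ∈ M') (h' : (x, y') ∈ M') : y = y' :=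
  congrArg Prod.snd (hm.2.1 (x, y) h (x, y') h' rfl)

lemma huniqS (hm : (P.aux).IsMatching M') {x x' : A ⊕ A} {y : B ⊕ A}
    (h : (x, y) ∈ M') (h' : (x', y) ∈ M') : x = x' :=
  congrArg Prod.fst (hm.2.2 (x, y) h (x', y) h' rfl)

/-- shape of a partner of the dummy woman `d(a)`. -/
lemma da_partner (hm : (P.aux).IsMatching M') {x : A ⊕ A} {a : A}
    (h : (x, (inr a : B ⊕ A)) ∈ M') : x = inl a ∨ x = inr a := by
  have hadj := hm.1 (x, inr a) h
  rcases x with c | c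
  · left; have : a = c := hadj; rw [this]
  · right; have : a = c := hadj; rw [this]

/-- shape of a partner of `a₀`. -/
lemma a0_partner (hm : (P.aux).IsMatching M') {y : B ⊕ A} {a : A}
    (h : ((inl a : A ⊕ A), y) ∈ M') : (∃ b : B, y = inl b ∧ P.adj a b) ∨ y = inr a := by
  have hadj := hm.1 (inl a, y) h
  rcases y with b | c
  · exact Or.inl ⟨b, rfl, hadj⟩
  · right; have : c = a := hadj; rw [this]

/-- shape of a partner of `a₁`. -/
lemma a1_partner (hm : (P.aux).IsMatching M') {y : B ⊕ A} {a : A}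
    (h : ((inr a : A ⊕ A), y) ∈ M') : (∃ b : B, y = inl b ∧ P.adj a b) ∨ y = inr a := by
  have hadj := hm.1 (inr a, y) h
  rcases y with b | c
  · exact Or.inl ⟨b, rfl, hadj⟩
  · right; have : c = a := hadj; rw [this]

lemma b_partner_adj (hm : (P.aux).IsMatching M') {a : A} {b : B}
    (h : ((inl a : A ⊕ A), (inl b : B ⊕ A)) ∈ M') : P.adj a b := hm.1 _ h

lemma b_partner_adj' (hm : (P.aux).IsMatching M') {a : A} {b : B}
    (h : ((inr a : A ⊕ A), (inl b : B ⊕ A)) ∈ M') : P.adj a b := hm.1 _ h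

lemma bl_notboth (hm : (P.aux).IsMatching M') {b : B} (h0 : BL0 M' b) (h1 : BL1 M' b) :
    False := by
  obtain ⟨a, ha⟩ := h0
  obtain ⟨a', ha'⟩ := h1
  exact absurd (huniqS P hm ha ha') (by simp)

/-- If `a₁` is matched to a real woman, then `a₀` is matched to `d(a)`. -/
lemma stab_F1 (hM' : (P.aux).Stable M') {a : A} {b : B}
    (h : ((inr a : A ⊕ A), (inl b : B ⊕ A)) ∈ M') :
    ((inl a : A ⊕ A), (inr a : B ⊕ A)) ∈ M' := by
  have hm := hM'.1
  by_contra hcon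
  refine hM'.2 (inr a) (inr a) ⟨rfl, ?_, ?_, ?_⟩
  · intro hmem
    exact absurd (huniqF P hm hmem h) (by simp)
  · intro y hy
    have hyb : y = inl b := huniqF P hm hy h
    subst hyb
    show 0 < P.rankA a b + 1
    omega
  · intro x hx
    rcases da_partner P hm hx with rfl | rfl
    · exact absurd hx hcon
    · exact absurd (huniqF P hm hx h) (by simp)

lemma notboth (hM' : (P.aux).Stable M') {a : A} (h0 : L0 M' a) (h1 : L1 M' a) : False := by
  obtain ⟨b, hb⟩ := h0
  obtain ⟨b', hb'⟩ := h1
  exact absurd (huniqF P hM'.1 hb (stab_F1 P hM' hb')) (by simp)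

/-- If `a₀` is not matched to a real woman, it is matched to `d(a)`. -/
lemma stab_F2 (hM' : (P.aux).Stable M') {a : A} (h : ¬ L0 M' a) :
    ((inl a : A ⊕ A), (inr a : B ⊕ A)) ∈ M' := by
  have hm := hM'.1
  by_contra hcon
  refine hM'.2 (inl a) (inr a) ⟨rfl, hcon, ?_, ?_⟩
  · intro y hy
    rcases a0_partner P hm hy with ⟨b, rfl, _⟩ | rfl
    · exact absurd ⟨b, hy⟩ h
    · exact absurd hy hcon
  · intro x hx
    rcases da_partner P hm hx with rfl | rfl
    · exact absurd hx hcon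
    · show 0 < 1; omega

/-- If `a₀` is matched to a real woman, then `a₁` is matched to `d(a)`. -/
lemma stab_F3 (hM' : (P.aux).Stable M') {a : A} {b : B}
    (h : ((inl a : A ⊕ A), (inl b : B ⊕ A)) ∈ M') :
    ((inr a : A ⊕ A), (inr a : B ⊕ A)) ∈ M' := by
  have hm := hM'.1
  by_contra hcon
  refine hM'.2 (inr a) (inr a) ⟨rfl, hcon, ?_, ?_⟩
  · intro y hy
    rcases a1_partner P hm hy with ⟨b', rfl, _⟩ | rfl
    · exact absurd (notboth P hM' ⟨b, h⟩ ⟨b', hy⟩) not_false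
    · exact absurd hy hcon
  · intro x hx
    rcases da_partner P hm hx with rfl | rfl
    · exact absurd (huniqF P hm hx h) (by simp)
    · exact absurd hx hcon

/-- If `a` is completely unmatched, `a₁` has no partner at all. -/
lemma a1_unmatched (hM' : (P.aux).Stable M') {a : A} (h0 : ¬ L0 M' a) (h1 : ¬ L1 M' a) :
    ∀ y, ((inr a : A ⊕ A), y) ∉ M' := by
  intro y hy
  rcases a1_partner P hM'.1 hy with ⟨b, rfl, _⟩ | rfl
  · exact h1 ⟨b, hy⟩
  · exact absurd (huniqS P hM'.1 (stab_F2 P hM' h0) hy) (by simp)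

lemma matchedA_iff {a : A} : (∃ b, (a, b) ∈ Tmap M') ↔ L0 M' a ∨ L1 M' a := by
  constructor
  · rintro ⟨b, hb⟩
    rcases (mem_Tmap M').1 hb with h | h
    · exact Or.inl ⟨b, h⟩
    · exact Or.inr ⟨b, h⟩
  · rintro (⟨b, hb⟩ | ⟨b, hb⟩)
    · exact ⟨b, (mem_Tmap M').2 (Or.inl hb)⟩
    · exact ⟨b, (mem_Tmap M').2 (Or.inr hb)⟩

lemma matchedB_iff {b : B} : (∃ a, (a, b) ∈ Tmap M') ↔ BL0 M' b ∨ BL1 M' b := by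
  constructor
  · rintro ⟨a, ha⟩
    rcases (mem_Tmap M').1 ha with h | h
    · exact Or.inl ⟨a, h⟩
    · exact Or.inr ⟨a, h⟩
  · rintro (⟨a, ha⟩ | ⟨a, ha⟩)
    · exact ⟨a, (mem_Tmap M').2 (Or.inl ha)⟩
    · exact ⟨a, (mem_Tmap M').2 (Or.inr ha)⟩

lemma Tmap_isMatching (hM' : (P.aux).Stable M') : P.IsMatching (Tmap M') := by
  have hm := hM'.1
  refine ⟨?_, ?_, ?_⟩
  · rintro ⟨a, b⟩ hp
    rcases (mem_Tmap M').1 hp with h | h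
    · exact hm.1 _ h
    · exact hm.1 _ h
  · rintro ⟨a, b⟩ hp ⟨a', b'⟩ hq h1
    cases h1
    rcases (mem_Tmap M').1 hp with h | h <;> rcases (mem_Tmap M').1 hq with h' | h'
    · cases huniqF P hm h h'; rfl
    · exact absurd (notboth P hM' ⟨b, h⟩ ⟨b', h'⟩) not_false
    · exact absurd (notboth P hM' ⟨b', h'⟩ ⟨b, h⟩) not_false
    · cases huniqF P hm h h'; rfl
  · rintro ⟨a, b⟩ hp ⟨a', b'⟩ hq h1
    cases h1
    rcases (mem_Tmap M').1 hp with h | h <;> rcases (mem_Tmap M').1 hq with h' | h'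
    · cases huniqS P hm h h'; rfl
    · exact absurd (huniqS P hm h h') (by simp)
    · exact absurd (huniqS P hm h h') (by simp)
    · cases huniqS P hm h h'; rfl

end Basic

section EdgeBound

variable (P : PrefSys A B) {M' : Finset ((A ⊕ A) × (B ⊕ A))}

lemma vAZ_le_one (M : Finset (A × B)) (a : A) (b : B) : vAZ P M a b ≤ 1 := by
  unfold vAZ; split_ifs <;> omega

lemma vBZ_le_one (M : Finset (A × B)) (a : A) (b : B) : vBZ P M a b ≤ 1 := by
  unfold vBZ; split_ifs <;> omega

lemma edge_bound (hM' : (P.aux).Stable M') {a : A} {b : B} (hadj : P.adj a b) :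
    vAZ P (Tmap M') a b + vBZ P (Tmap M') a b ≤ alphaA M' a + alphaB M' b ∧
    (¬ L0 M' a ∧ ¬ L1 M' a →
      vAZ P (Tmap M') a b + vBZ P (Tmap M') a b + 1 ≤ alphaA M' a + alphaB M' b) := by
  have hm := hM'.1
  have hblock := hM'.2
  by_cases hmem : (a, b) ∈ Tmap M'
  · have h0 : vAZ P (Tmap M') a b = 0 := if_pos hmem
    have h0' : vBZ P (Tmap M') a b = 0 := if_pos hmem
    rcases (mem_Tmap M').1 hmem with h | h
    · have e1 : alphaA M' a = 1 := if_pos ⟨b, h⟩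
      have e2 : alphaB M' b = -1 := by
        unfold alphaB
        rw [if_neg (fun h1 => bl_notboth P hm ⟨a, h⟩ h1), if_pos ⟨a, h⟩]
      exact ⟨by omega, fun hu => absurd ⟨b, h⟩ hu.1⟩
    · have e1 : alphaA M' a = -1 := by
        unfold alphaA
        rw [if_neg (fun h0 => notboth P hM' h0 ⟨b, h⟩), if_pos ⟨b, h⟩]
      have e2 : alphaB M' b = 1 := if_pos ⟨a, h⟩
      exact ⟨by omega, fun hu => absurd ⟨b, h⟩ hu.2⟩
  · by_cases hL0 : L0 M' a
    · obtain ⟨c, hc⟩ := hL0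
      have hcM : (a, c) ∈ Tmap M' := (mem_Tmap M').2 (Or.inl hc)
      have hA : alphaA M' a = 1 := if_pos ⟨c, hc⟩
      refine ⟨?_, fun hu => absurd ⟨c, hc⟩ hu.1⟩
      by_cases hB1 : BL1 M' b
      · have hB : alphaB M' b = 1 := if_pos hB1
        have := vAZ_le_one P (Tmap M') a b
        have := vBZ_le_one P (Tmap M') a b
        omega
      · by_cases hB0 : BL0 M' b
        · obtain ⟨a', ha'⟩ := hB0
          have hB : alphaB M' b = -1 := by
            unfold alphaB
            rw [if_neg hB1, if_pos ⟨a', ha'⟩]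
          have hnb : ¬ (P.voteAplus (Tmap M') a b ∧ P.voteBplus (Tmap M') a b) := by
            rintro ⟨hva, hvb⟩
            refine hblock (inl a) (inl b) ⟨hadj, ?_, ?_, ?_⟩
            · intro hmm; exact hmem ((mem_Tmap M').2 (Or.inl hmm))
            · intro y hy
              cases huniqF P hm hy hc
              show P.rankA a b < P.rankA a c
              exact hva c hcM
            · intro x hx
              cases huniqS P hm hx ha'
              show P.rankB b a + Finset.univ.sup (P.rankB b) + 1 <
                P.rankB b a' + Finset.univ.sup (P.rankB b) + 1
              have := hvb a' ((mem_Tmap M').2 (Or.inl ha'))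
              omega
          unfold vAZ vBZ
          rw [if_neg hmem, if_neg hmem]
          by_cases h1 : P.voteAplus (Tmap M') a b <;>
            by_cases h2 : P.voteBplus (Tmap M') a b <;>
            simp only [if_pos, if_neg, h1, h2, if_true, if_false] <;> try omega
          exact absurd ⟨h1, h2⟩ hnb
        · have hB : alphaB M' b = 0 := by
            unfold alphaB; rw [if_neg hB1, if_neg hB0]
          have hbun : ∀ x, (x, (inl b : B ⊕ A)) ∉ M' := by
            intro x hx
            rcases x with a' | a'
            · exact hB0 ⟨a', hx⟩
            · exact hB1 ⟨a', hx⟩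
          have hnva' : ¬ (P.aux).voteAplus M' (inl a) (inl b) := by
            intro hva'
            exact hblock (inl a) (inl b)
              ⟨hadj, fun hmm => hbun _ hmm, hva', fun x hx => absurd hx (hbun x)⟩
          unfold voteAplus at hnva'
          push_neg at hnva'
          obtain ⟨y, hy, hrank⟩ := hnva'
          cases huniqF P hm hy hc
          have hr : P.rankA a c ≤ P.rankA a b := hrank
          have hcb : c ≠ b := fun h => hmem (h ▸ hcM)
          have hlt : P.rankA a c < P.rankA a b :=
            lt_of_le_of_ne hr (fun h => hcb (P.rankA_inj a c b (b_partner_adj P hm hc) hadj h))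
          have hvaz : vAZ P (Tmap M') a b = -1 := by
            unfold vAZ
            rw [if_neg hmem, if_neg (fun hv => absurd (hv c hcM) (by omega))]
          have := vBZ_le_one P (Tmap M') a b
          omega
    · by_cases hL1 : L1 M' a
      · obtain ⟨c, hc⟩ := hL1
        have hcM : (a, c) ∈ Tmap M' := (mem_Tmap M').2 (Or.inr hc)
        have hF1 := stab_F1 P hM' hc
        have hA : alphaA M' a = -1 := by
          unfold alphaA; rw [if_neg hL0, if_pos ⟨c, hc⟩]
        refine ⟨?_, fun hu => absurd ⟨c, hc⟩ hu.2⟩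
        by_cases hB1 : BL1 M' b
        · obtain ⟨a', ha'⟩ := hB1
          have hB : alphaB M' b = 1 := if_pos ⟨a', ha'⟩
          have hnb : ¬ (P.voteAplus (Tmap M') a b ∧ P.voteBplus (Tmap M') a b) := by
            rintro ⟨hva, hvb⟩
            refine hblock (inr a) (inl b) ⟨hadj, ?_, ?_, ?_⟩
            · intro hmm; exact hmem ((mem_Tmap M').2 (Or.inr hmm))
            · intro y hy
              cases huniqF P hm hy hc
              show P.rankA a b + 1 < P.rankA a c + 1
              have := hva c hcM
              omega
            · intro x hx
              cases huniqS P hm hx ha'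
              show P.rankB b a < P.rankB b a'
              exact hvb a' ((mem_Tmap M').2 (Or.inr ha'))
          unfold vAZ vBZ
          rw [if_neg hmem, if_neg hmem]
          by_cases h1 : P.voteAplus (Tmap M') a b <;>
            by_cases h2 : P.voteBplus (Tmap M') a b <;>
            simp only [if_pos, if_neg, h1, h2, if_true, if_false] <;> try omega
          exact absurd ⟨h1, h2⟩ hnb
        · by_cases hB0 : BL0 M' b
          · obtain ⟨a', ha'⟩ := hB0
            have hB : alphaB M' b = -1 := by
              unfold alphaB; rw [if_neg hB1, if_pos ⟨a', ha'⟩]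
            -- `a` must prefer its partner `c` to `b`
            have hnva' : ¬ (P.aux).voteAplus M' (inr a) (inl b) := by
              intro hva'
              refine hblock (inr a) (inl b)
                ⟨hadj, fun hmm => hmem ((mem_Tmap M').2 (Or.inr hmm)), hva', ?_⟩
              intro x hx
              cases huniqS P hm hx ha'
              show P.rankB b a < P.rankB b a' + Finset.univ.sup (P.rankB b) + 1
              have := Finset.le_sup (f := P.rankB b) (Finset.mem_univ a)
              omega
            unfold voteAplus at hnva'
            push_neg at hnva'
            obtain ⟨y, hy, hrank⟩ := hnva'
            cases huniqF P hm hy hc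
            have hr : P.rankA a c + 1 ≤ P.rankA a b + 1 := hrank
            have hcb : c ≠ b := fun h => hmem (h ▸ hcM)
            have hlt : P.rankA a c < P.rankA a b := by
              have hne : P.rankA a c ≠ P.rankA a b :=
                fun h => hcb (P.rankA_inj a c b (b_partner_adj' P hm hc) hadj h)
              omega
            have hvaz : vAZ P (Tmap M') a b = -1 := by
              unfold vAZ
              rw [if_neg hmem, if_neg (fun hv => absurd (hv c hcM) (by omega))]
            -- `b` must prefer its partner `a'` to `a`
            have hnvb' : ¬ (P.aux).voteBplus M' (inl a) (inl b) := by
              intro hvb'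
              refine hblock (inl a) (inl b)
                ⟨hadj, fun hmm => hmem ((mem_Tmap M').2 (Or.inl hmm)), ?_, hvb'⟩
              intro y hy
              cases huniqF P hm hy hF1
              show P.rankA a b < Finset.univ.sup (P.rankA a) + 1
              have := Finset.le_sup (f := P.rankA a) (Finset.mem_univ b)
              omega
            unfold voteBplus at hnvb'
            push_neg at hnvb'
            obtain ⟨x, hx, hrank2⟩ := hnvb'
            cases huniqS P hm hx ha'
            have hr2 : P.rankB b a' + Finset.univ.sup (P.rankB b) + 1 ≤
                P.rankB b a + Finset.univ.sup (P.rankB b) + 1 := hrank2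
            have ha'a : a' ≠ a := fun h => hL0 ⟨b, h ▸ ha'⟩
            have hlt2 : P.rankB b a' < P.rankB b a := by
              have hne : P.rankB b a' ≠ P.rankB b a :=
                fun h => ha'a (P.rankB_inj b a' a (b_partner_adj P hm ha') hadj h)
              omega
            have hvbz : vBZ P (Tmap M') a b = -1 := by
              unfold vBZ
              rw [if_neg hmem, if_neg (fun hv =>
                absurd (hv a' ((mem_Tmap M').2 (Or.inl ha'))) (by omega))]
            omega
          · -- `b` unmatched while `a` is level 1: impossible
            exfalso
            have hbun : ∀ x, (x, (inl b : B ⊕ A)) ∉ M' := by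
              intro x hx
              rcases x with a' | a'
              · exact hB0 ⟨a', hx⟩
              · exact hB1 ⟨a', hx⟩
            refine hblock (inl a) (inl b)
              ⟨hadj, fun hmm => hbun _ hmm, ?_, fun x hx => absurd hx (hbun x)⟩
            intro y hy
            cases huniqF P hm hy hF1
            show P.rankA a b < Finset.univ.sup (P.rankA a) + 1
            have := Finset.le_sup (f := P.rankA a) (Finset.mem_univ b)
            omega
      · -- `a` unmatched
        have hF2 := stab_F2 P hM' hL0
        have ha1un := a1_unmatched P hM' hL0 hL1
        have hA : alphaA M' a = 0 := by unfold alphaA; rw [if_neg hL0, if_neg hL1]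
        have hanm : ∀ b', (a, b') ∉ Tmap M' := by
          intro b' hb'
          rcases (mem_Tmap M').1 hb' with h | h
          · exact hL0 ⟨b', h⟩
          · exact hL1 ⟨b', h⟩
        have hvaz : vAZ P (Tmap M') a b = 1 := by
          have hva : P.voteAplus (Tmap M') a b := fun b' hb' => absurd hb' (hanm b')
          unfold vAZ
          rw [if_neg hmem, if_pos hva]
        by_cases hB1 : BL1 M' b
        · obtain ⟨a', ha'⟩ := hB1
          have hB : alphaB M' b = 1 := if_pos ⟨a', ha'⟩
          have haa : a' ≠ a := fun h => hL1 ⟨b, h ▸ ha'⟩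
          have hnvb' : ¬ (P.aux).voteBplus M' (inr a) (inl b) := by
            intro hvb'
            exact hblock (inr a) (inl b)
              ⟨hadj, fun hmm => ha1un _ hmm, fun y hy => absurd hy (ha1un y), hvb'⟩
          unfold voteBplus at hnvb'
          push_neg at hnvb'
          obtain ⟨x, hx, hrank⟩ := hnvb'
          cases huniqS P hm hx ha'
          have hr : P.rankB b a' ≤ P.rankB b a := hrank
          have hlt : P.rankB b a' < P.rankB b a :=
            lt_of_le_of_ne hr
              (fun h => haa (P.rankB_inj b a' a (b_partner_adj' P hm ha') hadj h))
          have hvbz : vBZ P (Tmap M') a b = -1 := by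
            unfold vBZ
            rw [if_neg hmem, if_neg (fun hv =>
              absurd (hv a' ((mem_Tmap M').2 (Or.inr ha'))) (by omega))]
          exact ⟨by omega, fun _ => by omega⟩
        · -- `a` unmatched and `b` not level-1 matched: impossible
          exfalso
          refine hblock (inr a) (inl b)
            ⟨hadj, fun hmm => ha1un _ hmm, fun y hy => absurd hy (ha1un y), ?_⟩
          intro x hx
          rcases x with a' | a'
          · show P.rankB b a < P.rankB b a' + Finset.univ.sup (P.rankB b) + 1
            have := Finset.le_sup (f := P.rankB b) (Finset.mem_univ a)
            omega
          · exact absurd ⟨a', hx⟩ hB1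

end EdgeBound

section Sums

variable (P : PrefSys A B)

lemma sum_fst {N : Finset (A × B)} (hN : P.IsMatching N) (g : A → ℤ) :
    ∑ e ∈ N, g e.1 = ∑ a ∈ Finset.univ.filter (fun a : A => ∃ b, (a, b) ∈ N), g a := by
  refine Finset.sum_bij (fun e _ => e.1) ?_ ?_ ?_ ?_
  · intro e he
    exact Finset.mem_filter.2 ⟨Finset.mem_univ _, ⟨e.2, he⟩⟩
  · intro e₁ h₁ e₂ h₂ h
    exact hN.2.1 e₁ h₁ e₂ h₂ h
  · intro a ha
    obtain ⟨b, hb⟩ := (Finset.mem_filter.1 ha).2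
    exact ⟨(a, b), hb, rfl⟩
  · intro e he; rfl

lemma sum_snd {N : Finset (A × B)} (hN : P.IsMatching N) (g : B → ℤ) :
    ∑ e ∈ N, g e.2 = ∑ b ∈ Finset.univ.filter (fun b : B => ∃ a, (a, b) ∈ N), g b := by
  refine Finset.sum_bij (fun e _ => e.2) ?_ ?_ ?_ ?_
  · intro e he
    exact Finset.mem_filter.2 ⟨Finset.mem_univ _, ⟨e.1, he⟩⟩
  · intro e₁ h₁ e₂ h₂ h
    exact hN.2.2 e₁ h₁ e₂ h₂ h
  · intro b hb
    obtain ⟨a, ha⟩ := (Finset.mem_filter.1 hb).2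
    exact ⟨(a, b), ha, rfl⟩
  · intro e he; rfl

lemma count_cast {α : Type} [Fintype α] (p : α → Prop) :
    ((Nat.card {x : α // p x} : ℤ)) = ∑ x : α, (if p x then (1 : ℤ) else 0) := by
  rw [Finset.sum_boole, Nat.card_eq_fintype_card, Fintype.card_subtype]

lemma phi_sub (N M : Finset (A × B)) :
    (P.phi N M : ℤ) - (P.phi M N : ℤ) = ∑ a : A, sAZ P N M a + ∑ b : B, sBZ P N M b := by
  unfold phi sAZ sBZ
  push_cast
  rw [count_cast, count_cast, count_cast, count_cast,
    Finset.sum_sub_distrib, Finset.sum_sub_distrib]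
  ring

lemma sAZ_matched {N M : Finset (A × B)} (hN : P.IsMatching N) (hM : P.IsMatching M)
    {a : A} {b : B} (hab : (a, b) ∈ N) : sAZ P N M a = vAZ P M a b := by
  have hNuniq : ∀ b', (a, b') ∈ N → b' = b :=
    fun b' h => congrArg Prod.snd (hN.2.1 (a, b') h (a, b) hab rfl)
  by_cases hm : (a, b) ∈ M
  · have h1 : ¬ P.prefA N M a := by
      rintro ⟨b'', hb'', hall⟩
      cases hNuniq _ hb''
      exact lt_irrefl _ (hall b hm)
    have h2 : ¬ P.prefA M N a := by
      rintro ⟨c, hc, hall⟩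
      have hcb : c = b := congrArg Prod.snd (hM.2.1 (a, c) hc (a, b) hm rfl)
      cases hcb
      exact lt_irrefl _ (hall b hab)
    unfold sAZ vAZ
    rw [if_neg h1, if_neg h2, if_pos hm]
    ring
  · by_cases hv : P.voteAplus M a b
    · have h1 : P.prefA N M a := ⟨b, hab, hv⟩
      have h2 : ¬ P.prefA M N a := by
        rintro ⟨c, hc, hall⟩
        exact absurd (hv c hc) (not_lt.mpr (le_of_lt (hall b hab)))
      unfold sAZ vAZ
      rw [if_pos h1, if_neg h2, if_neg hm, if_pos hv]
      ring
    · have h1 : ¬ P.prefA N M a := by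
        rintro ⟨b'', hb'', hall⟩
        cases hNuniq _ hb''
        exact hv hall
      have h2 : P.prefA M N a := by
        unfold voteAplus at hv
        push_neg at hv
        obtain ⟨c, hc, hrank⟩ := hv
        have hcb : c ≠ b := fun h => hm (h ▸ hc)
        have hne : P.rankA a c ≠ P.rankA a b :=
          fun h => hcb (P.rankA_inj a c b (hM.1 _ hc) (hN.1 _ hab) h)
        have hlt : P.rankA a c < P.rankA a b := by omega
        exact ⟨c, hc, fun b' hb' => by rw [hNuniq _ hb']; exact hlt⟩
      unfold sAZ vAZ
      rw [if_neg h1, if_pos h2, if_neg hm, if_neg hv]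
      ring

lemma sBZ_matched {N M : Finset (A × B)} (hN : P.IsMatching N) (hM : P.IsMatching M)
    {a : A} {b : B} (hab : (a, b) ∈ N) : sBZ P N M b = vBZ P M a b := by
  have hNuniq : ∀ a', (a', b) ∈ N → a' = a :=
    fun a' h => congrArg Prod.fst (hN.2.2 (a', b) h (a, b) hab rfl)
  by_cases hm : (a, b) ∈ M
  · have h1 : ¬ P.prefB N M b := by
      rintro ⟨a'', ha'', hall⟩
      cases hNuniq _ ha''
      exact lt_irrefl _ (hall a hm)
    have h2 : ¬ P.prefB M N b := by
      rintro ⟨c, hc, hall⟩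
      have hcb : c = a := congrArg Prod.fst (hM.2.2 (c, b) hc (a, b) hm rfl)
      cases hcb
      exact lt_irrefl _ (hall a hab)
    unfold sBZ vBZ
    rw [if_neg h1, if_neg h2, if_pos hm]
    ring
  · by_cases hv : P.voteBplus M a b
    · have h1 : P.prefB N M b := ⟨a, hab, hv⟩
      have h2 : ¬ P.prefB M N b := by
        rintro ⟨c, hc, hall⟩
        exact absurd (hv c hc) (not_lt.mpr (le_of_lt (hall a hab)))
      unfold sBZ vBZ
      rw [if_pos h1, if_neg h2, if_neg hm, if_pos hv]
      ring
    · have h1 : ¬ P.prefB N M b := by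
        rintro ⟨a'', ha'', hall⟩
        cases hNuniq _ ha''
        exact hv hall
      have h2 : P.prefB M N b := by
        unfold voteBplus at hv
        push_neg at hv
        obtain ⟨c, hc, hrank⟩ := hv
        have hcb : c ≠ a := fun h => hm (h ▸ hc)
        have hne : P.rankB b c ≠ P.rankB b a :=
          fun h => hcb (P.rankB_inj b c a (hM.1 _ hc) (hN.1 _ hab) h)
        have hlt : P.rankB b c < P.rankB b a := by omega
        exact ⟨c, hc, fun a' ha' => by rw [hNuniq _ ha']; exact hlt⟩
      unfold sBZ vBZ
      rw [if_neg h1, if_pos h2, if_neg hm, if_neg hv]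
      ring

variable {M' : Finset ((A ⊕ A) × (B ⊕ A))}

lemma alphaA_ge (a : A) : -1 ≤ alphaA M' a := by unfold alphaA; split_ifs <;> omega

lemma alphaB_ge (b : B) : -1 ≤ alphaB M' b := by unfold alphaB; split_ifs <;> omega

lemma alphaA_unmatched {a : A} (h : ¬ ∃ b, (a, b) ∈ Tmap M') : alphaA M' a = 0 := by
  unfold alphaA
  rw [if_neg (fun h0 => h ((matchedA_iff (M' := M')).2 (Or.inl h0))),
    if_neg (fun h1 => h ((matchedA_iff (M' := M')).2 (Or.inr h1)))]

lemma alphaB_unmatched {b : B} (h : ¬ ∃ a, (a, b) ∈ Tmap M') : alphaB M' b = 0 := by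
  unfold alphaB
  rw [if_neg (fun h1 => h ((matchedB_iff (M' := M')).2 (Or.inr h1))),
    if_neg (fun h0 => h ((matchedB_iff (M' := M')).2 (Or.inl h0)))]

lemma sAZ_unmatched_le {N : Finset (A × B)} {a : A} (hnun : ∀ b, (a, b) ∉ N) :
    sAZ P N (Tmap M') a ≤ alphaA M' a := by
  have h1 : ¬ P.prefA N (Tmap M') a := by
    rintro ⟨b, hb, _⟩
    exact hnun b hb
  by_cases hmm : ∃ c, (a, c) ∈ Tmap M'
  · obtain ⟨c, hc⟩ := hmm
    have h2 : P.prefA (Tmap M') N a := ⟨c, hc, fun b' hb' => absurd hb' (hnun b')⟩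
    have := alphaA_ge (M' := M') a
    unfold sAZ
    rw [if_neg h1, if_pos h2]
    omega
  · have h2 : ¬ P.prefA (Tmap M') N a := by
      rintro ⟨c, hc, _⟩
      exact hmm ⟨c, hc⟩
    rw [alphaA_unmatched hmm]
    unfold sAZ
    rw [if_neg h1, if_neg h2]
    omega

lemma sBZ_unmatched_le {N : Finset (A × B)} {b : B} (hnun : ∀ a, (a, b) ∉ N) :
    sBZ P N (Tmap M') b ≤ alphaB M' b := by
  have h1 : ¬ P.prefB N (Tmap M') b := by
    rintro ⟨a, ha, _⟩
    exact hnun a ha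
  by_cases hmm : ∃ c, (c, b) ∈ Tmap M'
  · obtain ⟨c, hc⟩ := hmm
    have h2 : P.prefB (Tmap M') N b := ⟨c, hc, fun a' ha' => absurd ha' (hnun a')⟩
    have := alphaB_ge (M' := M') b
    unfold sBZ
    rw [if_neg h1, if_pos h2]
    omega
  · have h2 : ¬ P.prefB (Tmap M') N b := by
      rintro ⟨c, hc, _⟩
      exact hmm ⟨c, hc⟩
    rw [alphaB_unmatched hmm]
    unfold sBZ
    rw [if_neg h1, if_neg h2]
    omega

lemma alpha_pair (hM' : (P.aux).Stable M') {a : A} {b : B} (h : (a, b) ∈ Tmap M') :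
    alphaA M' a + alphaB M' b = 0 := by
  rcases (mem_Tmap M').1 h with h' | h'
  · have e1 : alphaA M' a = 1 := if_pos ⟨b, h'⟩
    have e2 : alphaB M' b = -1 := by
      unfold alphaB
      rw [if_neg (fun h1 => bl_notboth P hM'.1 ⟨a, h'⟩ h1), if_pos ⟨a, h'⟩]
    omega
  · have e1 : alphaA M' a = -1 := by
      unfold alphaA
      rw [if_neg (fun h0 => notboth P hM' h0 ⟨b, h'⟩), if_pos ⟨b, h'⟩]
    have e2 : alphaB M' b = 1 := if_pos ⟨a, h'⟩
    omega

lemma alpha_total (hM' : (P.aux).Stable M') :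
    ∑ a : A, alphaA M' a + ∑ b : B, alphaB M' b = 0 := by
  have hTm := Tmap_isMatching P hM'
  have hA0 : ∑ a ∈ Finset.univ.filter (fun a : A => ¬ ∃ b, (a, b) ∈ Tmap M'),
      alphaA M' a = 0 :=
    Finset.sum_eq_zero fun a ha => alphaA_unmatched (Finset.mem_filter.1 ha).2
  have hB0 : ∑ b ∈ Finset.univ.filter (fun b : B => ¬ ∃ a, (a, b) ∈ Tmap M'),
      alphaB M' b = 0 :=
    Finset.sum_eq_zero fun b hb => alphaB_unmatched (Finset.mem_filter.1 hb).2
  have hsplitA := Finset.sum_filter_add_sum_filter_not (Finset.univ : Finset A)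
    (fun a : A => ∃ b, (a, b) ∈ Tmap M') (alphaA M')
  have hsplitB := Finset.sum_filter_add_sum_filter_not (Finset.univ : Finset B)
    (fun b : B => ∃ a, (a, b) ∈ Tmap M') (alphaB M')
  have hedgeA := sum_fst P hTm (alphaA M')
  have hedgeB := sum_snd P hTm (alphaB M')
  have hpair : ∑ e ∈ Tmap M', alphaA M' e.1 + ∑ e ∈ Tmap M', alphaB M' e.2 = 0 := by
    rw [← Finset.sum_add_distrib]
    exact Finset.sum_eq_zero fun e he => alpha_pair P hM' (a := e.1) (b := e.2) he
  linarith

lemma main_bound (hM' : (P.aux).Stable M') {N : Finset (A × B)} (hN : P.IsMatching N) :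
    (P.phi N (Tmap M') : ℤ) - (P.phi (Tmap M') N : ℤ) ≤
      ∑ e ∈ N, (vAZ P (Tmap M') e.1 e.2 + vBZ P (Tmap M') e.1 e.2
        - alphaA M' e.1 - alphaB M' e.2) := by
  have hTm := Tmap_isMatching P hM'
  rw [phi_sub]
  have hsplitA := Finset.sum_filter_add_sum_filter_not (Finset.univ : Finset A)
    (fun a : A => ∃ b, (a, b) ∈ N) (sAZ P N (Tmap M'))
  have hsplitB := Finset.sum_filter_add_sum_filter_not (Finset.univ : Finset B)
    (fun b : B => ∃ a, (a, b) ∈ N) (sBZ P N (Tmap M'))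
  have hmatchA : ∑ a ∈ Finset.univ.filter (fun a : A => ∃ b, (a, b) ∈ N),
      sAZ P N (Tmap M') a = ∑ e ∈ N, vAZ P (Tmap M') e.1 e.2 := by
    rw [← sum_fst P hN (sAZ P N (Tmap M'))]
    exact Finset.sum_congr rfl fun e he => sAZ_matched P hN hTm he
  have hmatchB : ∑ b ∈ Finset.univ.filter (fun b : B => ∃ a, (a, b) ∈ N),
      sBZ P N (Tmap M') b = ∑ e ∈ N, vBZ P (Tmap M') e.1 e.2 := by
    rw [← sum_snd P hN (sBZ P N (Tmap M'))]
    exact Finset.sum_congr rfl fun e he => sBZ_matched P hN hTm he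
  have hunA : ∑ a ∈ Finset.univ.filter (fun a : A => ¬ ∃ b, (a, b) ∈ N),
      sAZ P N (Tmap M') a ≤
      ∑ a ∈ Finset.univ.filter (fun a : A => ¬ ∃ b, (a, b) ∈ N), alphaA M' a :=
    Finset.sum_le_sum fun a ha =>
      sAZ_unmatched_le P fun b hb => (Finset.mem_filter.1 ha).2 ⟨b, hb⟩
  have hunB : ∑ b ∈ Finset.univ.filter (fun b : B => ¬ ∃ a, (a, b) ∈ N),
      sBZ P N (Tmap M') b ≤
      ∑ b ∈ Finset.univ.filter (fun b : B => ¬ ∃ a, (a, b) ∈ N), alphaB M' b :=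
    Finset.sum_le_sum fun b hb =>
      sBZ_unmatched_le P fun a ha => (Finset.mem_filter.1 hb).2 ⟨a, ha⟩
  have hedgeA := sum_fst P hN (alphaA M')
  have hedgeB := sum_snd P hN (alphaB M')
  have hsplitαA := Finset.sum_filter_add_sum_filter_not (Finset.univ : Finset A)
    (fun a : A => ∃ b, (a, b) ∈ N) (alphaA M')
  have hsplitαB := Finset.sum_filter_add_sum_filter_not (Finset.univ : Finset B)
    (fun b : B => ∃ a, (a, b) ∈ N) (alphaB M')
  have htot := alpha_total P hM'
  have hRHS : ∑ e ∈ N, (vAZ P (Tmap M') e.1 e.2 + vBZ P (Tmap M') e.1 e.2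
        - alphaA M' e.1 - alphaB M' e.2)
      = ∑ e ∈ N, vAZ P (Tmap M') e.1 e.2 + ∑ e ∈ N, vBZ P (Tmap M') e.1 e.2
        - ∑ e ∈ N, alphaA M' e.1 - ∑ e ∈ N, alphaB M' e.2 := by
    rw [← Finset.sum_add_distrib, ← Finset.sum_sub_distrib, ← Finset.sum_sub_distrib]
  linarith

lemma card_filter_matched {N : Finset (A × B)} (hN : P.IsMatching N) :
    ((Finset.univ.filter (fun a : A => ∃ b, (a, b) ∈ N)).card : ℤ) = N.card := by
  have h := sum_fst P hN (fun _ => (1 : ℤ))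
  simpa using h.symm

end Sums

end AuxDom
end PrefSys

open PrefSys in
/-- the projection `T(M')` of any stable matching `M'` of the
auxiliary graph `G'` is a dominant matching of `G`. -/
theorem aux_stable_projects_to_dominant {A B : Type} [Fintype A] [Fintype B]
    (P : PrefSys A B) (M' : Finset ((A ⊕ A) × (B ⊕ A)))
    (hM' : (P.aux).Stable M') :
    P.Dominant (Tmap M') := by
  have hTm := AuxDom.Tmap_isMatching P hM'
  constructor
  · refine ⟨hTm, ?_⟩
    intro N hN
    have h := AuxDom.main_bound P hM' hN
    have hsl : ∑ e ∈ N, (AuxDom.vAZ P (Tmap M') e.1 e.2 + AuxDom.vBZ P (Tmap M') e.1 e.2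
        - AuxDom.alphaA M' e.1 - AuxDom.alphaB M' e.2) ≤ 0 := by
      apply Finset.sum_nonpos
      intro e he
      have hb := (AuxDom.edge_bound P hM' (hN.1 e he)).1
      omega
    have hle : (P.phi N (Tmap M') : ℤ) ≤ (P.phi (Tmap M') N : ℤ) := by linarith
    exact_mod_cast hle
  · intro N hN hcard
    have hcardN := AuxDom.card_filter_matched P hN
    have hcardM := AuxDom.card_filter_matched P hTm
    have hex : ∃ a : A, (∃ b, (a, b) ∈ N) ∧ ¬ ∃ b, (a, b) ∈ Tmap M' := by
      by_contra hcon
      push_neg at hcon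
      have hsub : Finset.univ.filter (fun a : A => ∃ b, (a, b) ∈ N) ⊆
          Finset.univ.filter (fun a : A => ∃ b, (a, b) ∈ Tmap M') := by
        intro a ha
        exact Finset.mem_filter.2 ⟨Finset.mem_univ _, hcon a (Finset.mem_filter.1 ha).2⟩
      have hle := Finset.card_le_card hsub
      have : (N.card : ℤ) ≤ ((Tmap M').card : ℤ) := by
        rw [← hcardN, ← hcardM]
        exact_mod_cast hle
      have : N.card ≤ (Tmap M').card := by exact_mod_cast this
      omega
    obtain ⟨a, ⟨b, hb⟩, hun⟩ := hex
    have hL0 : ¬ AuxDom.L0 M' a := fun h => hun (AuxDom.matchedA_iff.2 (Or.inl h))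
    have hL1 : ¬ AuxDom.L1 M' a := fun h => hun (AuxDom.matchedA_iff.2 (Or.inr h))
    have hstrict := (AuxDom.edge_bound P hM' (hN.1 (a, b) hb)).2 ⟨hL0, hL1⟩
    have hsl : ∑ e ∈ N, (AuxDom.vAZ P (Tmap M') e.1 e.2 + AuxDom.vBZ P (Tmap M') e.1 e.2
        - AuxDom.alphaA M' e.1 - AuxDom.alphaB M' e.2) < ∑ _e ∈ N, (0 : ℤ) := by
      refine Finset.sum_lt_sum ?_ ⟨(a, b), hb, ?_⟩
      · intro e he
        have hb' := (AuxDom.edge_bound P hM' (hN.1 e he)).1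
        omega
      · omega
    rw [Finset.sum_const_zero] at hsl
    have h := AuxDom.main_bound P hM' hN
    have hlt : (P.phi N (Tmap M') : ℤ) < (P.phi (Tmap M') N : ℤ) := by linarith
    exact_mod_cast hlt
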